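/- (General-rate mistake bound for M-PRIL.) Let ‖x^t‖_∞ ≤ 1 for all t ∈ [T], c = min_{t∈[T]} (y_r^t − y_l^t), and c₁ = K − c − 1 ≥ 1. Suppose there exist γ > 0, w* ∈ ℝ^d and θ* ∈ ℝ^{K−1} with nonnegative entries and ‖w*‖₁ + ‖θ*‖₁ = 1 such that z_i^t(w*·x^t − θ_i*) ≥ γ for all i ∈ Ī^t and all t ∈ [T]. Then for any learning rate η > 0 satisfying η γ > log((e^{η c₁} + e^{−η c₁})/2), the M-PRIL iterates satisfy Σ_{t=1}^T m^t ≤ log(K + d − 1) / (η γ − log((e^{η c₁} + e^{−η c₁})/2)), where m^t = |{i ∈ Ī^t : z_i^t(w^t·x^t − θ_i^t) ≤ 0}|. -/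

import Mathlib

open Finset

noncomputable def dotp {d : ℕ} (w x : Fin d → ℝ) : ℝ := ∑ i, w i * x i

noncomputable def zval (yl : ℕ) (i : ℕ) : ℝ := if i < yl then 1 else -1

def Ibar (K yl yr : ℕ) : Finset ℕ := Finset.Icc 1 (yl - 1) ∪ Finset.Icc yr (K - 1)

noncomputable def tau {d : ℕ} (K yl yr : ℕ) (x w : Fin d → ℝ) (θ : ℕ → ℝ) (i : ℕ) : ℝ :=
  if i ∈ Ibar K yl yr ∧ zval yl i * (dotp w x - θ i) ≤ 0 then zval yl i else 0

noncomputable def LMAE (K : ℕ) (f : ℝ) (θ : ℕ → ℝ) (yl yr : ℕ) : ℝ :=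
  (∑ i ∈ Finset.Icc 1 (yl - 1), if f < θ i then (1:ℝ) else 0) +
  (∑ i ∈ Finset.Icc yr (K - 1), if θ i ≤ f then (1:ℝ) else 0)

noncomputable def LIMC (K : ℕ) (f : ℝ) (yl yr : ℕ) (θ : ℕ → ℝ) : ℝ :=
  (∑ i ∈ Finset.Icc 1 (yl - 1), max 0 (θ i - f)) +
  (∑ i ∈ Finset.Icc yr (K - 1), max 0 (f - θ i))

noncomputable def mcount {d : ℕ} (K yl yr : ℕ) (x w : Fin d → ℝ) (θ : ℕ → ℝ) : ℕ :=
  ((Ibar K yl yr).filter (fun i => zval yl i * (dotp w x - θ i) ≤ 0)).card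

/-!
The potential `Φ_t = ∑ ws_i log w_i^t + ∑ θs_k log θ_k^t` starts at `-log (K + d - 1)` and
stays `≤ 0`. On a trial with `m ≥ 1` mistakes the margin of `(ws, θs)` raises it by at least
`η γ m - log Z`, while convexity of `exp` on `[-η c₁, η c₁]`, together with the fact that every
mistake pushes in a descent direction for the current `(w, θ)`, gives `Z ≤ cosh (η c₁)`. Hence
each trial raises `Φ` by at least `m (η γ - log cosh (η c₁))`; summing over the trials gives
the bound.
-/

open Real

lemma exp_le_cosh_add_div_mul_sinh {a b : ℝ} (hb : 0 < b) (ha : |a| ≤ b) :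
    exp a ≤ cosh b + a / b * sinh b := by
  obtain ⟨hab, hab'⟩ := abs_le.mp ha
  -- `a` is the convex combination `t b + (1 - t) (-b)` with `t = (b + a) / (2 b)`.
  have ht : 0 ≤ (b + a) / (2 * b) := div_nonneg (by linarith) (by linarith)
  have ht' : 0 ≤ 1 - (b + a) / (2 * b) := by
    rw [sub_nonneg, div_le_one (by linarith)]; linarith
  have hconv := convexOn_exp.2 (Set.mem_univ b) (Set.mem_univ (-b)) ht ht' (by ring)
  have harg : (b + a) / (2 * b) * b + (1 - (b + a) / (2 * b)) * -b = a := by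
    field_simp; ring
  simp only [smul_eq_mul, harg] at hconv
  refine hconv.trans_eq ?_
  rw [cosh_eq, sinh_eq]
  field_simp
  ring

section ExpWeights

variable {ι : Type*} (s : Finset ι)

lemma sum_mul_exp_le {p a : ι → ℝ} {b : ℝ} (hb : 0 < b) (hp : ∀ j ∈ s, 0 ≤ p j)
    (ha : ∀ j ∈ s, |a j| ≤ b) :
    ∑ j ∈ s, p j * exp (a j) ≤ cosh b * ∑ j ∈ s, p j + sinh b / b * ∑ j ∈ s, p j * a j := by
  rw [Finset.mul_sum, Finset.mul_sum, ← Finset.sum_add_distrib]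
  refine Finset.sum_le_sum fun j hj => ?_
  calc p j * exp (a j) ≤ p j * (cosh b + a j / b * sinh b) :=
        mul_le_mul_of_nonneg_left (exp_le_cosh_add_div_mul_sinh hb (ha j hj)) (hp j hj)
    _ = cosh b * p j + sinh b / b * (p j * a j) := by ring

lemma sum_mul_log_mul_exp_div (u a : ι → ℝ) {p : ι → ℝ} {Z : ℝ} (hp : ∀ j ∈ s, 0 < p j)
    (hZ : 0 < Z) :
    ∑ j ∈ s, u j * log (p j * exp (a j) / Z) =
      ∑ j ∈ s, u j * log (p j) + ∑ j ∈ s, u j * a j - log Z * ∑ j ∈ s, u j := by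
  rw [Finset.mul_sum, ← Finset.sum_add_distrib, ← Finset.sum_sub_distrib]
  refine Finset.sum_congr rfl fun j hj => ?_
  rw [log_div (mul_pos (hp j hj) (exp_pos _)).ne' hZ.ne', log_mul (hp j hj).ne' (exp_ne_zero _),
    log_exp]
  ring

end ExpWeights

lemma sum_le_div_of_mul_le_sub {T : ℕ} (hT : 1 ≤ T) {m Φ : ℕ → ℝ} {Δ L : ℝ} (hΔ : 0 < Δ)
    (hstep : ∀ t ∈ Icc 1 T, m t * Δ ≤ Φ (t + 1) - Φ t) (hinit : -L ≤ Φ 1)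
    (hfinal : Φ (T + 1) ≤ 0) :
    ∑ t ∈ Icc 1 T, m t ≤ L / Δ := by
  have htotal := Finset.sum_le_sum hstep
  rw [← Finset.sum_mul, Finset.sum_Icc_sub hT] at htotal
  rw [le_div_iff₀ hΔ]
  linarith

noncomputable section

namespace MPRIL

variable {d K : ℕ}

/-- `g` stands for the vector `τ^t` of the algorithm. -/
def normalizer (K : ℕ) (η : ℝ) (x w : Fin d → ℝ) (θ g : ℕ → ℝ) : ℝ :=
  ∑ i, w i * exp (η * x i * ∑ k ∈ Icc 1 (K - 1), g k) +
    ∑ k ∈ Icc 1 (K - 1), θ k * exp (-η * g k)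

def nextW (K : ℕ) (η : ℝ) (x w : Fin d → ℝ) (θ g : ℕ → ℝ) : Fin d → ℝ := fun i =>
  w i * exp (η * x i * ∑ k ∈ Icc 1 (K - 1), g k) / normalizer K η x w θ g

def nextθ (K : ℕ) (η : ℝ) (x w : Fin d → ℝ) (θ g : ℕ → ℝ) : ℕ → ℝ := fun k =>
  θ k * exp (-η * g k) / normalizer K η x w θ g

/-- Up to the entropy of `(ws, θs)`, this is `-KL((ws, θs) ‖ (w, θ))`. -/
def potential (K : ℕ) (ws : Fin d → ℝ) (θs : ℕ → ℝ) (w : Fin d → ℝ) (θ : ℕ → ℝ) : ℝ :=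
  ∑ i, ws i * log (w i) + ∑ k ∈ Icc 1 (K - 1), θs k * log (θ k)

structure IsPosDistrib (K : ℕ) (w : Fin d → ℝ) (θ : ℕ → ℝ) : Prop where
  w_pos : ∀ i, 0 < w i
  θ_pos : ∀ k ∈ Icc 1 (K - 1), 0 < θ k
  sum_eq_one : ∑ i, w i + ∑ k ∈ Icc 1 (K - 1), θ k = 1

lemma sum_mul_exponent_eq (η : ℝ) (s : Finset ℕ) (g θ : ℕ → ℝ) (u x : Fin d → ℝ) :
    ∑ i, u i * (η * x i * ∑ k ∈ s, g k) + ∑ k ∈ s, θ k * (-η * g k) =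
      η * ∑ k ∈ s, g k * (dotp u x - θ k) := by
  simp only [dotp, mul_sub, Finset.sum_sub_distrib, Finset.mul_sum]
  congr 1
  · rw [Finset.sum_comm]
    exact Finset.sum_congr rfl fun k _ => Finset.sum_congr rfl fun i _ => by ring
  · rw [← Finset.sum_neg_distrib]
    exact Finset.sum_congr rfl fun k _ => by ring

section Update

variable {η : ℝ} {x w : Fin d → ℝ} {θ g : ℕ → ℝ}

lemma isPosDistrib_const (hK : 2 ≤ K) :
    IsPosDistrib K (fun _ : Fin d => 1 / ((K : ℝ) + d - 1)) (fun _ => 1 / ((K : ℝ) + d - 1)) := by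
  have hN : 0 < (K : ℝ) + d - 1 := by
    have : (2 : ℝ) ≤ K := by exact_mod_cast hK
    linarith [Nat.cast_nonneg (α := ℝ) d]
  refine ⟨fun _ => one_div_pos.2 hN, fun _ _ => one_div_pos.2 hN, ?_⟩
  simp only [Finset.sum_const, Finset.card_univ, Fintype.card_fin, Nat.card_Icc, nsmul_eq_mul]
  rw [Nat.add_sub_cancel, Nat.cast_sub (by omega)]
  field_simp
  ring

lemma IsPosDistrib.normalizer_pos (h : IsPosDistrib K w θ) (hK : 2 ≤ K) :
    0 < normalizer K η x w θ g := by
  have h1 : 1 ∈ Icc 1 (K - 1) := Finset.mem_Icc.2 ⟨le_rfl, by omega⟩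
  have hθ : 0 < ∑ k ∈ Icc 1 (K - 1), θ k * exp (-η * g k) :=
    Finset.sum_pos' (fun k hk => (mul_pos (h.θ_pos k hk) (exp_pos _)).le)
      ⟨1, h1, mul_pos (h.θ_pos 1 h1) (exp_pos _)⟩
  have hw : 0 ≤ ∑ i, w i * exp (η * x i * ∑ k ∈ Icc 1 (K - 1), g k) :=
    Finset.sum_nonneg fun i _ => (mul_pos (h.w_pos i) (exp_pos _)).le
  exact add_pos_of_nonneg_of_pos hw hθ

lemma IsPosDistrib.next (h : IsPosDistrib K w θ) (hK : 2 ≤ K) :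
    IsPosDistrib K (nextW K η x w θ g) (nextθ K η x w θ g) := by
  have hZ := h.normalizer_pos (η := η) (x := x) (g := g) hK
  refine ⟨fun i => div_pos (mul_pos (h.w_pos i) (exp_pos _)) hZ,
    fun k hk => div_pos (mul_pos (h.θ_pos k hk) (exp_pos _)) hZ, ?_⟩
  simp only [nextW, nextθ]
  rw [← Finset.sum_div, ← Finset.sum_div, ← add_div]
  exact div_self hZ.ne'

lemma IsPosDistrib.potential_nonpos (h : IsPosDistrib K w θ) {ws : Fin d → ℝ} {θs : ℕ → ℝ}
    (hws : ∀ i, 0 ≤ ws i) (hθs : ∀ k ∈ Icc 1 (K - 1), 0 ≤ θs k) :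
    potential K ws θs w θ ≤ 0 := by
  have hwsum : 0 ≤ ∑ i, w i := Finset.sum_nonneg fun i _ => (h.w_pos i).le
  have hθsum : 0 ≤ ∑ k ∈ Icc 1 (K - 1), θ k :=
    Finset.sum_nonneg fun k hk => (h.θ_pos k hk).le
  refine add_nonpos (Finset.sum_nonpos fun i _ => ?_) (Finset.sum_nonpos fun k hk => ?_)
  · refine mul_nonpos_of_nonneg_of_nonpos (hws i) (log_nonpos (h.w_pos i).le ?_)
    linarith [h.sum_eq_one,
      Finset.single_le_sum (fun j _ => (h.w_pos j).le) (Finset.mem_univ i)]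
  · refine mul_nonpos_of_nonneg_of_nonpos (hθs k hk) (log_nonpos (h.θ_pos k hk).le ?_)
    linarith [h.sum_eq_one, Finset.single_le_sum (fun j hj => (h.θ_pos j hj).le) hk]

lemma potential_const {ws : Fin d → ℝ} {θs : ℕ → ℝ}
    (hsum : ∑ i, ws i + ∑ k ∈ Icc 1 (K - 1), θs k = 1) (c : ℝ) :
    potential K ws θs (fun _ => c) (fun _ => c) = log c := by
  simp only [potential, ← Finset.sum_mul, ← add_mul, hsum, one_mul]

lemma IsPosDistrib.potential_next_sub (h : IsPosDistrib K w θ) (hK : 2 ≤ K)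
    {ws : Fin d → ℝ} {θs : ℕ → ℝ} (hsum : ∑ i, ws i + ∑ k ∈ Icc 1 (K - 1), θs k = 1) :
    potential K ws θs (nextW K η x w θ g) (nextθ K η x w θ g) - potential K ws θs w θ =
      η * ∑ k ∈ Icc 1 (K - 1), g k * (dotp ws x - θs k) -
        log (normalizer K η x w θ g) := by
  have hZ := h.normalizer_pos (η := η) (x := x) (g := g) hK
  simp only [potential, nextW, nextθ]
  rw [sum_mul_log_mul_exp_div _ _ _ (fun i _ => h.w_pos i) hZ,
    sum_mul_log_mul_exp_div _ _ _ h.θ_pos hZ, ← sum_mul_exponent_eq]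
  linear_combination -log (normalizer K η x w θ g) * hsum

lemma IsPosDistrib.normalizer_le_cosh (h : IsPosDistrib K w θ) (hη : 0 < η) {b : ℝ} (hb : 1 ≤ b)
    (hx : ∀ i, |x i| ≤ 1) (hg : ∀ k ∈ Icc 1 (K - 1), |g k| ≤ 1)
    (hS : |∑ k ∈ Icc 1 (K - 1), g k| ≤ b)
    (hdescent : ∑ k ∈ Icc 1 (K - 1), g k * (dotp w x - θ k) ≤ 0) :
    normalizer K η x w θ g ≤ cosh (η * b) := by
  have hB : 0 < η * b := by positivity
  have hw := sum_mul_exp_le Finset.univ hB (p := w)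
    (a := fun i => η * x i * ∑ k ∈ Icc 1 (K - 1), g k)
    (fun i _ => (h.w_pos i).le) fun i _ => by
      rw [abs_mul, abs_mul, abs_of_pos hη, mul_assoc]
      gcongr
      exact (mul_le_mul (hx i) hS (abs_nonneg _) zero_le_one).trans_eq (one_mul b)
  have hθ := sum_mul_exp_le (Icc 1 (K - 1)) hB (p := θ) (a := fun k => -η * g k)
    (fun k hk => (h.θ_pos k hk).le) fun k hk => by
      rw [abs_mul, abs_neg, abs_of_pos hη]
      gcongr
      exact (hg k hk).trans hb
  have hexp := sum_mul_exponent_eq η (Icc 1 (K - 1)) g θ w x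
  have hsinh : 0 ≤ sinh (η * b) / (η * b) := div_nonneg (sinh_nonneg_iff.2 hB.le) hB.le
  calc normalizer K η x w θ g
      ≤ cosh (η * b) * (∑ i, w i + ∑ k ∈ Icc 1 (K - 1), θ k) +
          sinh (η * b) / (η * b) * (η * ∑ k ∈ Icc 1 (K - 1), g k * (dotp w x - θ k)) := by
        rw [← hexp, normalizer]; linarith
    _ ≤ cosh (η * b) := by
        rw [h.sum_eq_one, mul_one]
        have := mul_nonpos_of_nonneg_of_nonpos hη.le hdescent
        linarith [mul_nonpos_of_nonneg_of_nonpos hsinh this]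

lemma isPosDistrib_of_eq_next {T : ℕ} {x : ℕ → Fin d → ℝ} {w : ℕ → Fin d → ℝ}
    {θ g : ℕ → ℕ → ℝ} (hK : 2 ≤ K) (hinit : IsPosDistrib K (w 1) (θ 1))
    (hnext : ∀ t ∈ Icc 1 T, w (t + 1) = nextW K η (x t) (w t) (θ t) (g t) ∧
      θ (t + 1) = nextθ K η (x t) (w t) (θ t) (g t)) :
    ∀ t ∈ Icc 1 (T + 1), IsPosDistrib K (w t) (θ t) := by
  intro t ht
  obtain ⟨ht1, htT⟩ := Finset.mem_Icc.1 ht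
  clear ht
  induction t, ht1 using Nat.le_induction with
  | base => exact hinit
  | succ t ht1 ih =>
    obtain ⟨hw, hθ⟩ := hnext t (Finset.mem_Icc.2 ⟨ht1, by omega⟩)
    rw [hw, hθ]
    exact (ih (by omega)).next hK

end Update

section Mistakes

variable {yl yr : ℕ} {x w : Fin d → ℝ} {θ : ℕ → ℝ}

def mistakes (K yl yr : ℕ) (x w : Fin d → ℝ) (θ : ℕ → ℝ) : Finset ℕ :=
  (Ibar K yl yr).filter fun i => zval yl i * (dotp w x - θ i) ≤ 0

lemma mistakes_subset_Ibar : mistakes K yl yr x w θ ⊆ Ibar K yl yr := Finset.filter_subset _ _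

lemma card_mistakes : (mistakes K yl yr x w θ).card = mcount K yl yr x w θ := rfl

lemma abs_zval (i : ℕ) : |zval yl i| = 1 := by
  unfold zval; split_ifs <;> simp

lemma tau_eq_ite (i : ℕ) :
    tau K yl yr x w θ i = if i ∈ mistakes K yl yr x w θ then zval yl i else 0 := by
  simp only [tau, mistakes, Finset.mem_filter]

lemma abs_tau_le_one (i : ℕ) : |tau K yl yr x w θ i| ≤ 1 := by
  rw [tau_eq_ite]; split_ifs <;> simp [abs_zval]

lemma Ibar_subset_Icc (hl : yl ≤ K) (hr : 1 ≤ yr) : Ibar K yl yr ⊆ Icc 1 (K - 1) := by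
  intro i hi
  simp only [Ibar, Finset.mem_union, Finset.mem_Icc] at hi ⊢
  omega

lemma mcount_le (hl : 1 ≤ yl) (hlr : yl ≤ yr) (hr : yr ≤ K) {c : ℕ} (hc : c ≤ yr - yl) :
    (mcount K yl yr x w θ : ℝ) ≤ K - c - 1 := by
  have hcard : mcount K yl yr x w θ ≤ (yl - 1) + (K - yr) :=
    calc mcount K yl yr x w θ ≤ (Ibar K yl yr).card := Finset.card_filter_le _ _
      _ ≤ (Icc 1 (yl - 1)).card + (Icc yr (K - 1)).card := Finset.card_union_le _ _
      _ = (yl - 1) + (K - yr) := by simp only [Nat.card_Icc]; omega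
  have : ((mcount K yl yr x w θ + c + 1 : ℕ) : ℝ) ≤ K := by exact_mod_cast (by omega)
  push_cast at this
  linarith

variable {s : Finset ℕ}

lemma sum_tau_mul (hs : Ibar K yl yr ⊆ s) (f : ℕ → ℝ) :
    ∑ k ∈ s, tau K yl yr x w θ k * f k = ∑ k ∈ mistakes K yl yr x w θ, zval yl k * f k := by
  simp only [tau_eq_ite, ite_mul, zero_mul]
  rw [Finset.sum_ite_mem, Finset.inter_eq_right.2 (mistakes_subset_Ibar.trans hs)]

lemma abs_sum_tau_le_mcount (hs : Ibar K yl yr ⊆ s) :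
    |∑ k ∈ s, tau K yl yr x w θ k| ≤ mcount K yl yr x w θ := by
  have h := sum_tau_mul (x := x) (w := w) (θ := θ) hs fun _ => 1
  simp only [mul_one] at h
  rw [h, ← card_mistakes]
  refine (Finset.abs_sum_le_sum_abs _ _).trans_eq ?_
  simp [abs_zval]

lemma sum_tau_mul_nonpos (hs : Ibar K yl yr ⊆ s) :
    ∑ k ∈ s, tau K yl yr x w θ k * (dotp w x - θ k) ≤ 0 := by
  rw [sum_tau_mul hs]
  exact Finset.sum_nonpos fun k hk => (Finset.mem_filter.1 hk).2

lemma mcount_mul_le_sum_tau_mul (hs : Ibar K yl yr ⊆ s) {γ : ℝ} {ws : Fin d → ℝ}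
    {θs : ℕ → ℝ} (hmargin : ∀ i ∈ Ibar K yl yr, γ ≤ zval yl i * (dotp ws x - θs i)) :
    mcount K yl yr x w θ * γ ≤ ∑ k ∈ s, tau K yl yr x w θ k * (dotp ws x - θs k) := by
  rw [sum_tau_mul hs, ← card_mistakes, ← nsmul_eq_mul]
  exact Finset.card_nsmul_le_sum _ _ _ fun k hk => hmargin k (Finset.mem_filter.1 hk).1

lemma tau_eq_zero_of_mcount_eq_zero (h : mcount K yl yr x w θ = 0) (i : ℕ) :
    tau K yl yr x w θ i = 0 := by
  rw [← card_mistakes, Finset.card_eq_zero] at h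
  simp [tau_eq_ite, h]

end Mistakes

section Trial

variable {yl yr : ℕ} {η b : ℝ} {x w : Fin d → ℝ} {θ : ℕ → ℝ}

lemma IsPosDistrib.log_normalizer_tau_le (h : IsPosDistrib K w θ) (hK : 2 ≤ K)
    (hI : Ibar K yl yr ⊆ Icc 1 (K - 1)) (hx : ∀ i, |x i| ≤ 1) (hη : 0 < η) (hb : 1 ≤ b)
    (hm : (mcount K yl yr x w θ : ℝ) ≤ b) :
    log (normalizer K η x w θ (tau K yl yr x w θ)) ≤
      mcount K yl yr x w θ * log (cosh (η * b)) := by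
  rcases Nat.eq_zero_or_pos (mcount K yl yr x w θ) with hm0 | hm1
  · have hZ : normalizer K η x w θ (tau K yl yr x w θ) = 1 := by
      simp only [normalizer, tau_eq_zero_of_mcount_eq_zero hm0, Finset.sum_const_zero, mul_zero,
        exp_zero, mul_one]
      exact h.sum_eq_one
    simp [hZ, hm0]
  · have hZ := h.normalizer_le_cosh hη hb hx (fun k _ => abs_tau_le_one k)
      ((abs_sum_tau_le_mcount hI).trans hm) (sum_tau_mul_nonpos hI)
    calc log (normalizer K η x w θ (tau K yl yr x w θ))
        ≤ log (cosh (η * b)) := log_le_log (h.normalizer_pos hK) hZ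
      _ ≤ mcount K yl yr x w θ * log (cosh (η * b)) :=
        le_mul_of_one_le_left (log_nonneg (one_le_cosh _)) (by exact_mod_cast hm1)

lemma IsPosDistrib.mcount_mul_le_potential_next_sub (h : IsPosDistrib K w θ) (hK : 2 ≤ K)
    (hI : Ibar K yl yr ⊆ Icc 1 (K - 1)) (hx : ∀ i, |x i| ≤ 1) (hη : 0 < η) (hb : 1 ≤ b)
    (hm : (mcount K yl yr x w θ : ℝ) ≤ b) {γ : ℝ} {ws : Fin d → ℝ} {θs : ℕ → ℝ}
    (hsum : ∑ i, ws i + ∑ k ∈ Icc 1 (K - 1), θs k = 1)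
    (hmargin : ∀ i ∈ Ibar K yl yr, γ ≤ zval yl i * (dotp ws x - θs i)) :
    mcount K yl yr x w θ * (η * γ - log (cosh (η * b))) ≤
      potential K ws θs (nextW K η x w θ (tau K yl yr x w θ))
          (nextθ K η x w θ (tau K yl yr x w θ)) - potential K ws θs w θ := by
  rw [h.potential_next_sub hK hsum]
  have hgain :=
    mul_le_mul_of_nonneg_left (mcount_mul_le_sum_tau_mul (w := w) (θ := θ) hI hmargin) hη.le
  have hloss := h.log_normalizer_tau_le hK hI hx hη hb hm
  linarith

end Trial

end MPRIL

end

open MPRIL in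
theorem mpril_general_rate_mistake_bound_general
    {d K T : ℕ} (hK : 2 ≤ K) (hT : 1 ≤ T)
    (x : ℕ → Fin d → ℝ) (yl yr : ℕ → ℕ)
    (hy : ∀ t ∈ Finset.Icc 1 T, 1 ≤ yl t ∧ yl t ≤ yr t ∧ yr t ≤ K)
    (hx : ∀ t ∈ Finset.Icc 1 T, ∀ i, |x t i| ≤ 1)
    (c : ℕ)
    (hc : c = (Finset.Icc 1 T).inf' (Finset.nonempty_Icc.mpr hT)
      (fun t => yr t - yl t))
    (c₁ : ℝ) (hc1def : c₁ = (K : ℝ) - (c : ℝ) - 1) (hc1 : 1 ≤ c₁)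
    (γ : ℝ)
    (ws : Fin d → ℝ) (θs : ℕ → ℝ)
    (hws : ∀ i, 0 ≤ ws i) (hθs : ∀ i ∈ Finset.Icc 1 (K-1), 0 ≤ θs i)
    (hnorm : (∑ i, |ws i|) + (∑ i ∈ Finset.Icc 1 (K-1), |θs i|) = 1)
    (hmargin : ∀ t ∈ Finset.Icc 1 T, ∀ i ∈ Ibar K (yl t) (yr t),
      γ ≤ zval (yl t) i * (dotp ws (x t) - θs i))
    (η : ℝ) (hη : 0 < η)
    (hrate : Real.log ((Real.exp (η * c₁) + Real.exp (-(η * c₁))) / 2) < η * γ)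
    (w : ℕ → Fin d → ℝ) (θ : ℕ → ℕ → ℝ)
    (hw1 : ∀ i, w 1 i = 1 / ((K : ℝ) + (d : ℝ) - 1))
    (hθ1 : ∀ j, θ 1 j = 1 / ((K : ℝ) + (d : ℝ) - 1))
    (Z : ℕ → ℝ)
    (hZ : ∀ t ∈ Finset.Icc 1 T, Z t =
      (∑ i, w t i * Real.exp (η * x t i *
        ∑ k ∈ Finset.Icc 1 (K-1), tau K (yl t) (yr t) (x t) (w t) (θ t) k))
      + ∑ k ∈ Finset.Icc 1 (K-1),
          θ t k * Real.exp (-η * tau K (yl t) (yr t) (x t) (w t) (θ t) k))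
    (hwrec : ∀ t ∈ Finset.Icc 1 T, ∀ i,
      w (t+1) i = w t i * Real.exp (η * x t i *
        ∑ k ∈ Finset.Icc 1 (K-1), tau K (yl t) (yr t) (x t) (w t) (θ t) k) / Z t)
    (hθrec : ∀ t ∈ Finset.Icc 1 T, ∀ k,
      θ (t+1) k = θ t k * Real.exp (-η * tau K (yl t) (yr t) (x t) (w t) (θ t) k) / Z t) :
    (∑ t ∈ Finset.Icc 1 T, (mcount K (yl t) (yr t) (x t) (w t) (θ t) : ℝ))
      ≤ Real.log ((K : ℝ) + (d : ℝ) - 1)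
        / (η * γ - Real.log ((Real.exp (η * c₁) + Real.exp (-(η * c₁))) / 2)) := by
  rw [← cosh_eq] at hrate ⊢
  have hstar : ∑ i, ws i + ∑ k ∈ Icc 1 (K - 1), θs k = 1 := by
    rwa [Finset.sum_congr rfl fun i _ => abs_of_nonneg (hws i),
      Finset.sum_congr rfl fun k hk => abs_of_nonneg (hθs k hk)] at hnorm
  have hnext : ∀ t ∈ Icc 1 T,
      w (t + 1) = nextW K η (x t) (w t) (θ t) (tau K (yl t) (yr t) (x t) (w t) (θ t)) ∧
      θ (t + 1) = nextθ K η (x t) (w t) (θ t) (tau K (yl t) (yr t) (x t) (w t) (θ t)) :=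
    fun t ht => ⟨funext fun i => by rw [hwrec t ht, hZ t ht, nextW, normalizer],
      funext fun k => by rw [hθrec t ht, hZ t ht, nextθ, normalizer]⟩
  have hdistrib := isPosDistrib_of_eq_next hK
    (by rw [funext hw1, funext hθ1]; exact isPosDistrib_const hK) hnext
  have hstep : ∀ t ∈ Icc 1 T,
      mcount K (yl t) (yr t) (x t) (w t) (θ t) * (η * γ - log (cosh (η * c₁))) ≤
        potential K ws θs (w (t + 1)) (θ (t + 1)) - potential K ws θs (w t) (θ t) := by
    intro t ht
    obtain ⟨hl, hlr, hr⟩ := hy t ht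
    have hct : c ≤ yr t - yl t := by rw [hc]; exact Finset.inf'_le _ ht
    obtain ⟨hw, hθ⟩ := hnext t ht
    rw [hw, hθ]
    exact (hdistrib t (Finset.Icc_subset_Icc_right T.le_succ ht)).mcount_mul_le_potential_next_sub
      hK (Ibar_subset_Icc (by omega) (by omega)) (hx t ht) hη hc1
      ((mcount_le hl hlr hr hct).trans_eq hc1def.symm) hstar (hmargin t ht)
  refine sum_le_div_of_mul_le_sub hT (Φ := fun t => potential K ws θs (w t) (θ t))
    (by linarith) hstep ?_
    ((hdistrib (T + 1) (Finset.mem_Icc.2 ⟨by omega, le_rfl⟩)).potential_nonpos hws hθs)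
  rw [funext hw1, funext hθ1, potential_const hstar, one_div, log_inv]

/-- General-rate mistake bound for M-PRIL. -/
theorem mpril_general_rate_mistake_bound
    {d K T : ℕ} (hd : 1 ≤ d) (hK : 2 ≤ K) (hT : 1 ≤ T)
    (x : ℕ → Fin d → ℝ) (yl yr : ℕ → ℕ)
    (hy : ∀ t ∈ Finset.Icc 1 T, 1 ≤ yl t ∧ yl t ≤ yr t ∧ yr t ≤ K)
    (hx : ∀ t ∈ Finset.Icc 1 T, ∀ i, |x t i| ≤ 1)
    (c : ℕ)
    (hc : c = (Finset.Icc 1 T).inf' (Finset.nonempty_Icc.mpr hT)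
      (fun t => yr t - yl t))
    (c₁ : ℝ) (hc1def : c₁ = (K : ℝ) - (c : ℝ) - 1) (hc1 : 1 ≤ c₁)
    (γ : ℝ) (hγ : 0 < γ)
    (ws : Fin d → ℝ) (θs : ℕ → ℝ)
    (hws : ∀ i, 0 ≤ ws i) (hθs : ∀ i ∈ Finset.Icc 1 (K-1), 0 ≤ θs i)
    (hnorm : (∑ i, |ws i|) + (∑ i ∈ Finset.Icc 1 (K-1), |θs i|) = 1)
    (hmargin : ∀ t ∈ Finset.Icc 1 T, ∀ i ∈ Ibar K (yl t) (yr t),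
      γ ≤ zval (yl t) i * (dotp ws (x t) - θs i))
    (η : ℝ) (hη : 0 < η)
    (hrate : Real.log ((Real.exp (η * c₁) + Real.exp (-(η * c₁))) / 2) < η * γ)
    (w : ℕ → Fin d → ℝ) (θ : ℕ → ℕ → ℝ)
    (hw1 : ∀ i, w 1 i = 1 / ((K : ℝ) + (d : ℝ) - 1))
    (hθ1 : ∀ j, θ 1 j = 1 / ((K : ℝ) + (d : ℝ) - 1))
    (Z : ℕ → ℝ)
    (hZ : ∀ t ∈ Finset.Icc 1 T, Z t =
      (∑ i, w t i * Real.exp (η * x t i *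
        ∑ k ∈ Finset.Icc 1 (K-1), tau K (yl t) (yr t) (x t) (w t) (θ t) k))
      + ∑ k ∈ Finset.Icc 1 (K-1),
          θ t k * Real.exp (-η * tau K (yl t) (yr t) (x t) (w t) (θ t) k))
    (hwrec : ∀ t ∈ Finset.Icc 1 T, ∀ i,
      w (t+1) i = w t i * Real.exp (η * x t i *
        ∑ k ∈ Finset.Icc 1 (K-1), tau K (yl t) (yr t) (x t) (w t) (θ t) k) / Z t)
    (hθrec : ∀ t ∈ Finset.Icc 1 T, ∀ k,
      θ (t+1) k = θ t k * Real.exp (-η * tau K (yl t) (yr t) (x t) (w t) (θ t) k) / Z t) :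
    (∑ t ∈ Finset.Icc 1 T, (mcount K (yl t) (yr t) (x t) (w t) (θ t) : ℝ))
      ≤ Real.log ((K : ℝ) + (d : ℝ) - 1)
        / (η * γ - Real.log ((Real.exp (η * c₁) + Real.exp (-(η * c₁))) / 2)) :=
  mpril_general_rate_mistake_bound_general hK hT x yl yr hy hx c hc c₁ hc1def hc1 γ ws θs hws hθs
    hnorm hmargin η hη hrate w θ hw1 hθ1 Z hZ hwrec hθrec
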